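/- arXiv:2010.00666 — 2 statements merged into one kernel-verified Lean document; each statement's English description precedes it below -/
import Mathlib

section
/- Let R be a finite r-group (r a prime) and let A be a noncyclic abelian p-group (p a prime) acting faithfully on R by automorphisms. If this action is good, then R is generated by the fixed-point subgroups of the nontrivial elements of A, i.e. R = ⟨ C_R(a) : a ∈ A, a ≠ 1 ⟩. -/
/-!
Induct on `|R|` and write `S = ⟨C_R(a) : a ≠ 1⟩`; as `A` is abelian, `S` is `A`-invariant.
Goodness passes to `A`-invariant subgroups and quotients, and it lifts fixed points from a
quotient `R/N`: applied to `⟨a⟩` acting on the preimage `H` of `C_{R/N}(a)`, it gives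
`H = [H, a] C_H(a)` with `[H, a] ≤ N`. So if `R` has a proper nontrivial `A`-invariant normal
subgroup `N`, induction gives `N ≤ S` and `R/N = SN/N`, whence `S = R`. Otherwise the (nontrivial,
characteristic) centre is all of `R`, so `R` is abelian and `S ∈ {1, R}`. If `S = 1`, every
`a ≠ 1` acts fixed-point-freely. For `r = p` this contradicts the existence of a nontrivial
`A`-fixed point. For `r ≠ p`, take `a, b` generating a `C_p × C_p` in `A`: the norms of `x` along
the cyclic subgroups `⟨a b^i⟩` and `⟨b^k⟩` all vanish, and combining them leaves `x^p = 1`,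
impossible in a nontrivial `r`-group.
-/

open Pointwise

/-- The subgroup of elements of `G` fixed by every element of a subgroup `B` of `A`. -/
def fixedSubgroup (A G : Type*) [Group A] [Group G] [MulDistribMulAction A G]
    (B : Subgroup A) : Subgroup G where
  carrier := {g | ∀ b ∈ B, b • g = g}
  one_mem' := fun b _ => smul_one b
  mul_mem' := fun {x y} hx hy b hb => by rw [smul_mul', hx b hb, hy b hb]
  inv_mem' := fun {x} hx b hb => by rw [smul_inv', hx b hb]

/-- The subgroup of elements of `G` fixed by a single element `a` of `A`, i.e. `C_G(a)`. -/
def fixedPointsOf (A G : Type*) [Group A] [Group G] [MulDistribMulAction A G]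
    (a : A) : Subgroup G where
  carrier := {g | a • g = g}
  one_mem' := smul_one a
  mul_mem' := fun {x y} hx hy => by
    simp only [Set.mem_setOf_eq] at *; rw [smul_mul', hx, hy]
  inv_mem' := fun {x} hx => by
    simp only [Set.mem_setOf_eq] at *; rw [smul_inv', hx]

/-- The commutator subgroup `[H, B]` for the action of `A` on `G`. -/
def actionCommutator (A G : Type*) [Group A] [Group G] [MulDistribMulAction A G]
    (H : Subgroup G) (B : Subgroup A) : Subgroup G :=
  Subgroup.closure {x | ∃ h ∈ H, ∃ b ∈ B, x = h⁻¹ * (b • h)}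

/-- The action of `A` on `G` is *good* if `H = [H,B] C_H(B)` for every subgroup `B ≤ A`
and every `B`-invariant subgroup `H ≤ G`. -/
def IsGoodAction (A G : Type*) [Group A] [Group G] [MulDistribMulAction A G] : Prop :=
  ∀ (B : Subgroup A) (H : Subgroup G), (∀ b ∈ B, ∀ h ∈ H, b • h ∈ H) →
    (H : Set G) =
      (actionCommutator A G H B : Set G) * ((H ⊓ fixedSubgroup A G B : Subgroup G) : Set G)

section GoodAction

variable {A G G' : Type*} [Group A] [Group G] [Group G']
  [MulDistribMulAction A G] [MulDistribMulAction A G']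

theorem mem_fixedPointsOf {a : A} {g : G} : g ∈ fixedPointsOf A G a ↔ a • g = g := Iff.rfl

theorem fixedSubgroup_zpowers (a : A) :
    fixedSubgroup A G (Subgroup.zpowers a) = fixedPointsOf A G a := by
  ext g
  refine ⟨fun hg => hg a (Subgroup.mem_zpowers a), fun hg b hb => ?_⟩
  exact (Subgroup.zpowers_le (H := MulAction.stabilizer A g)).mpr hg hb

theorem actionCommutator_le {H : Subgroup G} {B : Subgroup A}
    (hH : ∀ b ∈ B, ∀ h ∈ H, b • h ∈ H) : actionCommutator A G H B ≤ H := by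
  refine (Subgroup.closure_le _).2 ?_
  rintro _ ⟨h, hh, b, hb, rfl⟩
  exact mul_mem (inv_mem hh) (hH b hb h hh)

theorem map_actionCommutator (f : G →* G') (hf : ∀ (a : A) x, f (a • x) = a • f x)
    (H : Subgroup G) (B : Subgroup A) :
    (actionCommutator A G H B).map f = actionCommutator A G' (H.map f) B := by
  rw [actionCommutator, actionCommutator, MonoidHom.map_closure]
  congr 1
  ext y
  constructor
  · rintro ⟨_, ⟨h, hh, b, hb, rfl⟩, rfl⟩
    exact ⟨f h, ⟨h, hh, rfl⟩, b, hb, by rw [map_mul, map_inv, hf]⟩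
  · rintro ⟨_, ⟨h, hh, rfl⟩, b, hb, rfl⟩
    exact ⟨h⁻¹ * (b • h), ⟨h, hh, b, hb, rfl⟩, by rw [map_mul, map_inv, hf]⟩

theorem isGoodAction_iff : IsGoodAction A G ↔
    ∀ (B : Subgroup A) (H : Subgroup G), (∀ b ∈ B, ∀ h ∈ H, b • h ∈ H) →
      ∀ h ∈ H, ∃ c ∈ actionCommutator A G H B, ∃ f ∈ H ⊓ fixedSubgroup A G B, c * f = h := by
  refine forall₂_congr fun B H => imp_congr_right fun hH => ?_
  refine ⟨fun h => h.subset, fun h => Set.Subset.antisymm h ?_⟩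
  rintro _ ⟨c, hc, f, hf, rfl⟩
  exact mul_mem (actionCommutator_le hH hc) hf.1

namespace IsGoodAction

theorem of_injective (hG : IsGoodAction A G) (ι : G' →* G) (hι : Function.Injective ι)
    (hι' : ∀ (a : A) x, ι (a • x) = a • ι x) : IsGoodAction A G' := by
  rw [isGoodAction_iff] at hG ⊢
  intro B H hH h hh
  have hHι : ∀ b ∈ B, ∀ x ∈ H.map ι, b • x ∈ H.map ι := by
    rintro b hb _ ⟨x, hx, rfl⟩
    exact ⟨b • x, hH b hb x hx, hι' b x⟩
  obtain ⟨c, hc, f, ⟨⟨f, hf, rfl⟩, hfix⟩, hcf⟩ := hG B _ hHι (ι h) ⟨h, hh, rfl⟩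
  rw [← map_actionCommutator ι hι'] at hc
  obtain ⟨c, hc, rfl⟩ := hc
  refine ⟨c, hc, f, ⟨hf, fun b hb => hι ?_⟩, hι (by rw [map_mul, hcf])⟩
  rw [hι', hfix b hb]

theorem of_surjective (hG : IsGoodAction A G) (π : G →* G') (hπ : Function.Surjective π)
    (hπ' : ∀ (a : A) x, π (a • x) = a • π x) : IsGoodAction A G' := by
  rw [isGoodAction_iff] at hG ⊢
  intro B H hH x hx
  obtain ⟨h, rfl⟩ := hπ x
  have hHπ : ∀ b ∈ B, ∀ y ∈ H.comap π, b • y ∈ H.comap π := by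
    intro b hb y hy
    rw [Subgroup.mem_comap, hπ']
    exact hH b hb _ hy
  obtain ⟨c, hc, f, ⟨hf, hfix⟩, rfl⟩ := hG B _ hHπ h hx
  have hc' := Subgroup.mem_map_of_mem π hc
  rw [map_actionCommutator π hπ', Subgroup.map_comap_eq_self_of_surjective hπ] at hc'
  exact ⟨π c, hc', π f, ⟨hf, fun b hb => by rw [← hπ', hfix b hb]⟩, (map_mul π c f).symm⟩

theorem fixedPointsOf_le_map (hG : IsGoodAction A G) (π : G →* G') (hπ : Function.Surjective π)
    (hπ' : ∀ (a : A) x, π (a • x) = a • π x) (a : A) :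
    fixedPointsOf A G' a ≤ (fixedPointsOf A G a).map π := by
  rw [← fixedSubgroup_zpowers, ← fixedSubgroup_zpowers]
  intro x hx
  obtain ⟨h, rfl⟩ := hπ x
  set H := (fixedSubgroup A G' (Subgroup.zpowers a)).comap π
  have hH : ∀ b ∈ Subgroup.zpowers a, ∀ y ∈ H, b • y ∈ H := by
    intro b hb y hy
    rw [Subgroup.mem_comap, hπ', hy b hb]
    exact hy
  obtain ⟨c, hc, f, ⟨-, hf⟩, rfl⟩ := (isGoodAction_iff.mp hG) _ H hH h hx
  have hc1 : π c = 1 := by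
    suffices actionCommutator A G H (Subgroup.zpowers a) ≤ π.ker from this hc
    refine (Subgroup.closure_le _).2 ?_
    rintro _ ⟨y, hy, b, hb, rfl⟩
    rw [SetLike.mem_coe, MonoidHom.mem_ker, map_mul, map_inv, hπ', hy b hb, inv_mul_cancel]
  exact ⟨f, hf, by rw [map_mul, hc1, one_mul]⟩

end IsGoodAction

end GoodAction

section InducedActions

variable {A G : Type*} [Group A] [Group G] [MulDistribMulAction A G]

theorem Subgroup.smul_mem_of_characteristic {H : Subgroup G} [hH : H.Characteristic] (a : A)
    {x : G} (hx : x ∈ H) : a • x ∈ H :=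
  Subgroup.characteristic_iff_map_le.mp hH (MulDistribMulAction.toMulEquiv G a) ⟨x, hx, rfl⟩

variable  (N : Subgroup G) (hN : ∀ (a : A), ∀ x ∈ N, a • x ∈ N)

abbrev MulDistribMulAction.onInvariantSubgroup : MulDistribMulAction A N :=
  letI : SMul A N := ⟨fun a x => ⟨a • (x : G), hN a x x.2⟩⟩
  N.subtype_injective.mulDistribMulAction N.subtype fun _ _ => rfl

abbrev MulDistribMulAction.onInvariantQuotient [N.Normal] : MulDistribMulAction A (G ⧸ N) :=
  letI : SMul A (G ⧸ N) := ⟨fun a =>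
    QuotientGroup.map N N (MulDistribMulAction.toMonoidHom G a) fun x hx => hN a x hx⟩
  (QuotientGroup.mk'_surjective N).mulDistribMulAction (QuotientGroup.mk' N) fun _ _ => rfl

end InducedActions

section FixedPointsSpan

variable (A G : Type*) [Group A] [Group G] [MulDistribMulAction A G]

def fixedPointsSpan : Subgroup G := ⨆ (a : A) (_ : a ≠ 1), fixedPointsOf A G a

variable {A G} {G' : Type*} [Group G'] [MulDistribMulAction A G']

theorem fixedPointsOf_le_fixedPointsSpan {a : A} (ha : a ≠ 1) :
    fixedPointsOf A G a ≤ fixedPointsSpan A G :=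
  le_iSup₂ (f := fun (a : A) (_ : a ≠ 1) => fixedPointsOf A G a) a ha

theorem map_fixedPointsSpan_le (f : G →* G') (hf : ∀ (a : A) x, f (a • x) = a • f x) :
    (fixedPointsSpan A G).map f ≤ fixedPointsSpan A G' := by
  rw [fixedPointsSpan, Subgroup.map_iSup]
  refine iSup_le fun a => ?_
  rw [Subgroup.map_iSup]
  refine iSup_le fun ha => le_trans ?_ (fixedPointsOf_le_fixedPointsSpan ha)
  rintro _ ⟨x, hx, rfl⟩
  rw [mem_fixedPointsOf, ← hf, hx]

theorem IsGoodAction.fixedPointsSpan_le_map (hG : IsGoodAction A G) (π : G →* G')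
    (hπ : Function.Surjective π) (hπ' : ∀ (a : A) x, π (a • x) = a • π x) :
    fixedPointsSpan A G' ≤ (fixedPointsSpan A G).map π :=
  iSup₂_le fun _ ha => (hG.fixedPointsOf_le_map π hπ hπ' _).trans
    (Subgroup.map_mono (fixedPointsOf_le_fixedPointsSpan ha))

theorem IsGoodAction.fixedPointsSpan_eq_top_of_ker_le_range {K Q : Type*} [Group K] [Group Q]
    [MulDistribMulAction A K] [MulDistribMulAction A Q] (hG : IsGoodAction A G) (ι : K →* G)
    (hι : ∀ (a : A) x, ι (a • x) = a • ι x) (π : G →* Q) (hπ : Function.Surjective π)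
    (hπ' : ∀ (a : A) x, π (a • x) = a • π x) (hker : π.ker ≤ ι.range)
    (hK : fixedPointsSpan A K = ⊤) (hQ : fixedPointsSpan A Q = ⊤) :
    fixedPointsSpan A G = ⊤ := by
  have hKS : ι.range ≤ fixedPointsSpan A G := by
    rw [MonoidHom.range_eq_map, ← hK]
    exact map_fixedPointsSpan_le ι hι
  rw [← Subgroup.comap_map_eq_self (hker.trans hKS),
    top_le_iff.mp (hQ.ge.trans (hG.fixedPointsSpan_le_map π hπ hπ')), Subgroup.comap_top]

theorem smul_mem_fixedPointsSpan {b : A} (hb : ∀ a : A, Commute a b) {x : G}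
    (hx : x ∈ fixedPointsSpan A G) : b • x ∈ fixedPointsSpan A G := by
  refine map_fixedPointsSpan_le (MulDistribMulAction.toMonoidHom G b) (fun a y => ?_)
    (Subgroup.mem_map_of_mem _ hx)
  simp only [MulDistribMulAction.toMonoidHom_apply, smul_smul, (hb a).eq]

end FixedPointsSpan

section Averaging

open Finset

variable {A R : Type*} [Group A] [CommGroup R] [MulDistribMulAction A R]

theorem prod_range_pow_smul_mem_fixedPointsOf {c : A} {n : ℕ} (hc : c ^ n = 1) (x : R) :
    ∏ k ∈ range n, c ^ k • x ∈ fixedPointsOf A R c := by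
  rw [mem_fixedPointsOf, Finset.smul_prod']
  simp_rw [smul_smul, ← pow_succ']
  have h := (prod_range_succ (fun k => c ^ k • x) n).symm.trans
    (prod_range_succ' (fun k => c ^ k • x) n)
  rw [hc, pow_zero] at h
  exact mul_right_cancel h.symm

theorem pow_eq_one_of_fixedPointsOf_eq_bot {p : ℕ} (hp : p.Prime)
    (hfree : ∀ c : A, c ≠ 1 → fixedPointsOf A R c = ⊥) {a b : A} (hab : Commute a b)
    (ha : a ^ p = 1) (hb : b ^ p = 1) (hb1 : b ≠ 1) (hab' : a ∉ Subgroup.zpowers b) (x : R) :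
    x ^ p = 1 := by
  have norm_eq_one {c : A} (hc : c ≠ 1) (hcp : c ^ p = 1) : ∏ k ∈ range p, c ^ k • x = 1 :=
    Subgroup.mem_bot.mp (hfree c hc ▸ prod_range_pow_smul_mem_fixedPointsOf hcp x)
  have hb_ord : orderOf b = p := haveI := Fact.mk hp; orderOf_eq_prime hb hb1
  have hbk {k : ℕ} (hk : k ∈ range p) (hk0 : k ≠ 0) : b ^ k ≠ 1 := fun h =>
    hk0 (Nat.eq_zero_of_dvd_of_lt (hb_ord ▸ orderOf_dvd_of_pow_eq_one h) (mem_range.mp hk))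
  have hline (i : ℕ) : a * b ^ i ≠ 1 := fun h =>
    hab' (eq_inv_of_mul_eq_one_left h ▸ inv_mem (Subgroup.pow_mem _ (Subgroup.mem_zpowers b) i))
  have hline_pow (i : ℕ) : (a * b ^ i) ^ p = 1 := by
    rw [(hab.pow_right i).mul_pow, ha, one_mul, pow_right_comm, hb, one_pow]
  -- Regroup the product of the norms of `x` along the `p` subgroups `⟨a * b ^ i⟩`: the `k`-th
  -- layer is `a ^ k` applied to a norm along `⟨b ^ k⟩`, and only the layer `k = 0` survives.
  calc x ^ p = ∏ k ∈ range p, a ^ k • ∏ i ∈ range p, (b ^ k) ^ i • x := by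
        rw [prod_eq_single_of_mem 0 (mem_range.mpr hp.pos)]
        · simp
        · intro k hk hk0
          rw [norm_eq_one (hbk hk hk0) (by rw [pow_right_comm, hb, one_pow]), smul_one]
    _ = ∏ i ∈ range p, ∏ k ∈ range p, (a * b ^ i) ^ k • x := by
        rw [prod_comm]
        refine prod_congr rfl fun k _ => ?_
        rw [Finset.smul_prod']
        refine prod_congr rfl fun i _ => ?_
        rw [smul_smul, (hab.pow_right i).mul_pow, pow_right_comm]
    _ = 1 := prod_eq_one fun i _ => norm_eq_one (hline i) (hline_pow i)

end Averaging

section NoncyclicAbelian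

variable {A : Type*} [CommGroup A] [Finite A] {p : ℕ}

theorem exists_pow_prime_eq_one_not_mem_zpowers_of_ne_top [Fact p.Prime] (hA : IsPGroup p A)
    {g : A} (hg : orderOf g = Monoid.exponent A) (hN : Subgroup.zpowers g ≠ ⊤) :
    ∃ y : A, y ^ p = 1 ∧ y ∉ Subgroup.zpowers g := by
  set N := Subgroup.zpowers g
  obtain ⟨q, hq⟩ : ∃ q : A ⧸ N, orderOf q = p :=
    exists_prime_orderOf_dvd_card' p ((hA.to_quotient N).card_eq_or_dvd.resolve_left
      fun h => hN (Subgroup.index_eq_one.mp h))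
  obtain ⟨h, rfl⟩ := QuotientGroup.mk_surjective q
  have hhN : h ∉ N := fun hh => (Fact.out : p.Prime).ne_one <| by
    rwa [(QuotientGroup.eq_one_iff h).mpr hh, orderOf_one, eq_comm] at hq
  obtain ⟨m, hm⟩ : ∃ m : ℤ, g ^ m = h ^ p := by
    rw [← Subgroup.mem_zpowers_iff, ← QuotientGroup.eq_one_iff, QuotientGroup.mk_pow, ← hq,
      pow_orderOf_eq_one]
  obtain ⟨e, he⟩ := IsPGroup.iff_orderOf.mp hA g
  have hh : h ^ p ^ e = 1 := he ▸ hg ▸ Monoid.pow_exponent_eq_one h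
  cases e with
  | zero => exact absurd (by rw [pow_zero, pow_one] at hh; rw [hh]; exact one_mem N) hhN
  | succ e =>
    -- `(h ^ p) ^ p ^ e = 1` forces `h ^ p` into the `p`-th powers of `N ≅ C_{p ^ (e + 1)}`.
    obtain ⟨t, rfl⟩ : (p : ℤ) ∣ m := by
      have : ((p ^ e * p : ℕ) : ℤ) ∣ m * p ^ e := by
        rw [← pow_succ, ← he, orderOf_dvd_iff_zpow_eq_one, zpow_mul, hm, ← Nat.cast_pow,
          zpow_natCast, ← pow_mul, ← pow_succ', hh]
      push_cast at this
      have hp0 : (p : ℤ) ^ e ≠ 0 := pow_ne_zero _ (mod_cast (Fact.out : p.Prime).ne_zero)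
      rwa [mul_comm m, mul_dvd_mul_iff_left hp0] at this
    refine ⟨h * g ^ (-t), ?_, fun hmem => hhN ?_⟩
    · rw [mul_pow, ← zpow_natCast (g ^ (-t)), ← zpow_mul, ← hm, neg_mul, zpow_neg, mul_comm t,
        mul_inv_cancel]
    · simpa using mul_mem hmem (Subgroup.zpow_mem _ (Subgroup.mem_zpowers g) t)

theorem exists_pow_prime_eq_one_not_mem_zpowers (hp : p.Prime) (hA : IsPGroup p A)
    (hA' : ¬IsCyclic A) :
    ∃ a b : A, a ^ p = 1 ∧ b ^ p = 1 ∧ b ≠ 1 ∧ a ∉ Subgroup.zpowers b := by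
  have := Fact.mk hp
  obtain ⟨g, hg⟩ := Monoid.exists_orderOf_eq_exponent (G := A) Monoid.ExponentExists.of_finite
  have hN : Subgroup.zpowers g ≠ ⊤ := fun h =>
    hA' ⟨g, fun x => Subgroup.mem_zpowers_iff.mp (h ▸ Subgroup.mem_top x)⟩
  obtain ⟨a, ha, haN⟩ := exists_pow_prime_eq_one_not_mem_zpowers_of_ne_top hA hg hN
  have hpg : p ∣ orderOf g := by
    rw [hg, ← orderOf_eq_prime ha fun h => haN (h ▸ one_mem _)]
    exact Monoid.order_dvd_exponent a
  refine ⟨a, g ^ (orderOf g / p), ha, ?_, ?_, fun h => haN (Subgroup.zpowers_le.mpr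
    (Subgroup.pow_mem _ (Subgroup.mem_zpowers g) _) h)⟩
  · rw [← pow_mul, Nat.div_mul_cancel hpg, pow_orderOf_eq_one]
  · refine pow_ne_one_of_lt_orderOf ?_ (Nat.div_lt_self (orderOf_pos g) hp.one_lt)
    exact (Nat.div_ne_zero_iff_of_dvd hpg).mpr ⟨(orderOf_pos g).ne', hp.ne_zero⟩

end NoncyclicAbelian

theorem fixedPointsSpan_ne_bot {A R : Type*} [CommGroup A] [Finite A] [Group R]
    [IsMulCommutative R] [Finite R] [Nontrivial R] [MulDistribMulAction A R] {p r : ℕ}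
    (hp : p.Prime) (hr : r.Prime) (hAp : IsPGroup p A) (hAnc : ¬IsCyclic A) (hR : IsPGroup r R) :
    fixedPointsSpan A R ≠ ⊥ := by
  intro hS
  have hfree (c : A) (hc : c ≠ 1) : fixedPointsOf A R c = ⊥ :=
    le_bot_iff.mp (hS ▸ fixedPointsOf_le_fixedPointsSpan hc)
  obtain ⟨a, b, ha, hb, hb1, hab⟩ := exists_pow_prime_eq_one_not_mem_zpowers hp hAp hAnc
  have := Fact.mk hr
  by_cases hrp : r = p
  · subst hrp
    obtain ⟨x, hx, h1x⟩ := hAp.exists_fixed_point_of_prime_dvd_card_of_fixed_point R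
      (hR.card_eq_or_dvd.resolve_left Finite.one_lt_card.ne') (a := 1) fun _ => smul_one _
    exact h1x (Subgroup.mem_bot.mp (hfree b hb1 ▸ hx b : x ∈ (⊥ : Subgroup R))).symm
  · have := Fact.mk hp
    let : CommGroup R := { ‹Group R› with mul_comm := mul_comm' }
    have hRp : IsPGroup p R := fun x => ⟨1, by
      rw [pow_one]
      exact pow_eq_one_of_fixedPointsOf_eq_bot hp hfree (Commute.all a b) ha hb hb1 hab x⟩
    exact top_ne_bot (disjoint_self.mp
      (IsPGroup.disjoint_of_ne r p hrp ⊤ ⊤ (hR.to_subgroup ⊤) (hRp.to_subgroup ⊤)))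

theorem fixedPointsSpan_eq_top {A : Type*} [CommGroup A] [Finite A] {p r : ℕ} (hp : p.Prime)
    (hr : r.Prime) (hAp : IsPGroup p A) (hAnc : ¬IsCyclic A) (R : Type*) [Group R] [Finite R]
    [MulDistribMulAction A R] (hR : IsPGroup r R) (hgood : IsGoodAction A R) :
    fixedPointsSpan A R = ⊤ := by
  induction hn : Nat.card R using Nat.strong_induction_on generalizing R with
  | _ n ih =>
  subst hn
  by_cases hN : ∃ N : Subgroup R, N.Normal ∧ (∀ (a : A), ∀ x ∈ N, a • x ∈ N) ∧ N ≠ ⊥ ∧ N ≠ ⊤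
  · obtain ⟨N, hNn, hNinv, hNbot, hNtop⟩ := hN
    let := MulDistribMulAction.onInvariantSubgroup N hNinv
    let := MulDistribMulAction.onInvariantQuotient N hNinv
    have hN_lt : Nat.card N < Nat.card R :=
      N.card_le_card_group.lt_of_ne fun h => hNtop (N.eq_top_of_card_eq h)
    have hQ_lt : Nat.card (R ⧸ N) < Nat.card R := by
      rw [N.card_eq_card_quotient_mul_card_subgroup]
      exact lt_mul_of_one_lt_right Nat.card_pos (N.one_lt_card_iff_ne_bot.mpr hNbot)
    have hπ := QuotientGroup.mk'_surjective N
    refine hgood.fixedPointsSpan_eq_top_of_ker_le_range N.subtype (fun _ _ => rfl)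
      (QuotientGroup.mk' N) hπ (fun _ _ => rfl) (by rw [QuotientGroup.ker_mk', N.range_subtype])
      (ih _ hN_lt N (hR.to_subgroup N)
        (hgood.of_injective N.subtype N.subtype_injective fun _ _ => rfl) rfl)
      (ih _ hQ_lt (R ⧸ N) (hR.to_quotient N) (hgood.of_surjective _ hπ fun _ _ => rfl) rfl)
  · push Not at hN
    rcases subsingleton_or_nontrivial R with _ | _
    · exact Subsingleton.elim _ _
    have := Fact.mk hr
    have hZ : Subgroup.center R = ⊤ :=
      hN _ inferInstance (fun a _ hx => Subgroup.smul_mem_of_characteristic a hx)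
        ((Subgroup.nontrivial_iff_ne_bot _).mp hR.center_nontrivial)
    have := Subgroup.center_eq_top_iff.mp hZ
    exact hN _ inferInstance (fun a _ hx => smul_mem_fixedPointsSpan (fun c => Commute.all c a) hx)
      (fixedPointsSpan_ne_bot hp hr hAp hAnc hR)

theorem stmt0_general {r p : ℕ} (hr : r.Prime) (hp : p.Prime)
    (R A : Type*) [Group R] [Group A] [Finite R] [Finite A] [MulDistribMulAction A R]
    (hR : IsPGroup r R)
    (hAcomm : ∀ x y : A, x * y = y * x) (hAp : IsPGroup p A) (hAnc : ¬ IsCyclic A)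
    (hgood : IsGoodAction A R) :
    (⊤ : Subgroup R) = ⨆ (a : A) (_ : a ≠ 1), fixedPointsOf A R a := by
  let : CommGroup A := { ‹Group A› with mul_comm := hAcomm }
  exact (fixedPointsSpan_eq_top hp hr hAp hAnc R hR hgood).symm

/-- If a noncyclic abelian `p`-group `A` acts faithfully and goodly on a
finite `r`-group `R`, then `R = ⟨ C_R(a) : 1 ≠ a ∈ A ⟩`. -/
theorem stmt0 {r p : ℕ} (hr : r.Prime) (hp : p.Prime)
    (R A : Type*) [Group R] [Group A] [Finite R] [Finite A] [MulDistribMulAction A R]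
    (hR : IsPGroup r R)
    (hAcomm : ∀ x y : A, x * y = y * x) (hAp : IsPGroup p A) (hAnc : ¬ IsCyclic A)
    (hfaithful : ∀ a : A, (∀ g : R, a • g = g) → a = 1)
    (hgood : IsGoodAction A R) :
    (⊤ : Subgroup R) = ⨆ (a : A) (_ : a ≠ 1), fixedPointsOf A R a :=
  stmt0_general hr hp R A hR hAcomm hAp hAnc hgood
end

section
/- Let p be a prime. Suppose a finite solvable group G is acted on by an elementary abelian p-group A with |A| ≥ p^3, the action is good, and C_G(a) is abelian for every nonidentity element a ∈ A. Then G is abelian. -/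
/-!
Induct on `A`-invariant subgroups `H ≤ G` to show that `H` lies in the subgroup generated by the
`C_G(B)` with `|A : B| ≤ p`. If `H ≠ 1`, solvability gives `[H, H] < H`; choose `K` maximal among
the `A`-invariant subgroups with `[H, H] ≤ K < H`. Then `H/K` is an abelian group on which `A`
acts irreducibly, so by Schur's lemma `A` acts on it through a cyclic group of exponent `p`,
and some `B` of index at most `p` centralises `H/K`, i.e. `[H, B] ≤ K`. Goodness gives
`H = [H, B] C_H(B) ≤ K C_G(B)`, and `K` is handled by induction. Applied to `H = G`: any two such
`B` meet nontrivially because `|A| ≥ p³`, so their centralisers lie in some abelian `C_G(a)`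
with `a ≠ 1`, and `G` is generated by pairwise commuting elements.
-/

open Pointwise

theorem Subgroup.commutator_lt_self {G : Type*} [Group G] [Group.IsSolvable G] {H : Subgroup G}
    (hH : H ≠ ⊥) : ⁅H, H⁆ < H := by
  have : Nontrivial H := (Subgroup.nontrivial_iff_ne_bot H).mpr hH
  rw [← Subgroup.map_subtype_commutator]
  have := Subgroup.map_subtype_lt_map_subtype.mpr
    (Group.IsSolvable.commutator_lt_top_of_nontrivial H)
  rwa [← MonoidHom.range_eq_map, Subgroup.range_subtype] at this

theorem Subgroup.inf_ne_bot_of_index_mul_index_lt {A : Type*} [Group A] {B₁ B₂ : Subgroup A}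
    (h : B₁.index * B₂.index < Nat.card A) : B₁ ⊓ B₂ ≠ ⊥ := by
  intro hbot
  have := Subgroup.index_inf_le (H := B₁) (K := B₂)
  rw [hbot, Subgroup.index_bot] at this
  omega

class IsInvariantSubgroup (A : Type*) {G : Type*} [Group A] [Group G] [MulDistribMulAction A G]
    (H : Subgroup G) : Prop where
  smul_mem : ∀ (a : A) {g : G}, g ∈ H → a • g ∈ H

namespace IsInvariantSubgroup

variable {A G : Type*} [Group A] [Group G] [MulDistribMulAction A G]

instance top : IsInvariantSubgroup A (⊤ : Subgroup G) := ⟨fun _ _ _ => Subgroup.mem_top _⟩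

instance commutator (H K : Subgroup G) [IsInvariantSubgroup A H] [IsInvariantSubgroup A K] :
    IsInvariantSubgroup A ⁅H, K⁆ where
  smul_mem a g hg := by
    have hmap : ⁅H, K⁆.map (MulDistribMulAction.toMonoidHom G a) ≤ ⁅H, K⁆ := by
      rw [Subgroup.map_commutator]
      exact Subgroup.commutator_mono
        (Subgroup.map_le_iff_le_comap.mpr fun _ => smul_mem a)
        (Subgroup.map_le_iff_le_comap.mpr fun _ => smul_mem a)
    exact hmap ⟨g, hg, rfl⟩

instance toMulDistribMulAction (H : Subgroup G) [IsInvariantSubgroup A H] :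
    MulDistribMulAction A H where
  smul a h := ⟨a • (h : G), smul_mem a h.2⟩
  one_smul h := Subtype.ext (one_smul A (h : G))
  mul_smul a b h := Subtype.ext (mul_smul a b (h : G))
  smul_mul a x y := Subtype.ext (smul_mul' a (x : G) (y : G))
  smul_one a := Subtype.ext (smul_one a)

instance subgroupOf (H K : Subgroup G) [IsInvariantSubgroup A H] [IsInvariantSubgroup A K] :
    IsInvariantSubgroup A (K.subgroupOf H) :=
  ⟨fun a _ hk => smul_mem (H := K) a hk⟩

instance quotientMulDistribMulAction (N : Subgroup G) [N.Normal] [IsInvariantSubgroup A N] :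
    MulDistribMulAction A (G ⧸ N) where
  smul a := Quotient.map' (a • ·) fun x y hxy => by
    rw [QuotientGroup.leftRel_apply] at hxy ⊢
    simpa only [smul_mul', smul_inv'] using smul_mem a hxy
  one_smul x := QuotientGroup.induction_on x fun g => congrArg _ (one_smul A g)
  mul_smul a b x := QuotientGroup.induction_on x fun g => congrArg _ (mul_smul a b g)
  smul_mul a x y := QuotientGroup.induction_on x fun g => QuotientGroup.induction_on y fun g' =>
    congrArg _ (smul_mul' a g g')
  smul_one a := congrArg _ (smul_one a)

end IsInvariantSubgroup

instance Additive.distribMulAction {A Q : Type*} [Monoid A] [Monoid Q] [MulDistribMulAction A Q] :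
    DistribMulAction A (Additive Q) where
  smul a x := .ofMul (a • x.toMul)
  one_smul x := one_smul A x.toMul
  mul_smul a b x := mul_smul a b x.toMul
  smul_zero a := smul_one (N := Q) a
  smul_add a x y := smul_mul' a x.toMul y.toMul

section Representation

variable (A M : Type*) [Group A] [AddCommGroup M] [DistribMulAction A M]

def actionSubring : Subring (Module.End ℤ M) :=
  Subring.closure (Set.range (DistribMulAction.toModuleEnd ℤ M : A →* Module.End ℤ M))

variable {A M}

theorem toModuleEnd_mem_actionSubring (a : A) :
    DistribMulAction.toModuleEnd ℤ M a ∈ actionSubring A M :=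
  Subring.subset_closure ⟨a, rfl⟩

theorem isMulCommutative_actionSubring (hAcomm : ∀ x y : A, x * y = y * x) :
    IsMulCommutative (actionSubring A M) :=
  Subring.isMulCommutative_closure <| by
    rintro _ ⟨a, rfl⟩ _ ⟨b, rfl⟩
    rw [← map_mul, ← map_mul, hAcomm]

open scoped IsMulCommutative in
/-- A nonzero `r` commutes with the action, so its kernel is `A`-invariant, hence trivial. -/
theorem isDomain_actionSubring [Nontrivial M] (hAcomm : ∀ x y : A, x * y = y * x)
    (hirred : ∀ L : AddSubgroup M, (∀ a : A, ∀ x ∈ L, a • x ∈ L) → L = ⊥ ∨ L = ⊤) :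
    IsDomain (actionSubring A M) := by
  have := isMulCommutative_actionSubring (M := M) hAcomm
  have hinj (r : actionSubring A M) (hr : r ≠ 0) : Function.Injective (r : Module.End ℤ M) := by
    have hinv (a : A) (x : M) (hx : (r : Module.End ℤ M) x = 0) :
        (r : Module.End ℤ M) (a • x) = 0 := by
      have hcomm := congrArg Subtype.val (mul_comm r ⟨_, toModuleEnd_mem_actionSubring a⟩)
      simpa [hx] using congrArg (· x) hcomm
    rcases hirred (LinearMap.ker (r : Module.End ℤ M)).toAddSubgroup hinv with hbot | htop
    · rw [← LinearMap.ker_eq_bot, ← Submodule.toAddSubgroup_inj]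
      exact hbot
    · refine absurd (Subtype.ext (LinearMap.ext fun x => ?_)) hr
      exact (htop ▸ AddSubgroup.mem_top x : x ∈ (LinearMap.ker (r : Module.End ℤ M)).toAddSubgroup)
  have : NoZeroDivisors (actionSubring A M) := ⟨fun {r s} hrs => or_iff_not_imp_left.mpr fun hr =>
    Subtype.ext <| LinearMap.ext fun x => hinj r hr <| by
      simpa using congrArg (fun t : actionSubring A M => (t : Module.End ℤ M) x) hrs⟩
  exact NoZeroDivisors.to_isDomain _

open scoped IsMulCommutative in
/-- Schur's lemma for an abelian group `A` of exponent `p`: the image of `A` is a finite subgroup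
of the units of a finite domain, hence cyclic, hence of order at most `p`. -/
theorem index_ker_toModuleEnd_le {p : ℕ} (hp : 0 < p) [Finite M]
    (hAcomm : ∀ x y : A, x * y = y * x) (hAelem : ∀ a : A, a ^ p = 1)
    (hirred : ∀ L : AddSubgroup M, (∀ a : A, ∀ x ∈ L, a • x ∈ L) → L = ⊥ ∨ L = ⊤) :
    (DistribMulAction.toModuleEnd ℤ M : A →* Module.End ℤ M).ker.index ≤ p := by
  set φ : A →* Module.End ℤ M := DistribMulAction.toModuleEnd ℤ M
  cases subsingleton_or_nontrivial M with
  | inl _ =>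
    have : φ.ker = ⊤ := by
      ext a
      simpa using LinearMap.ext fun x => Subsingleton.elim (φ a x) x
    rw [this, Subgroup.index_top]
    exact hp
  | inr _ =>
  have := isMulCommutative_actionSubring (M := M) hAcomm
  have := isDomain_actionSubring hAcomm hirred
  have : Finite (Module.End ℤ M) := Finite.of_injective _ DFunLike.coe_injective
  let ψ : A →* (actionSubring A M)ˣ :=
    (φ.codRestrict (actionSubring A M).toSubmonoid toModuleEnd_mem_actionSubring).toHomUnits
  have hker : ψ.ker = φ.ker := by
    ext a
    simp [ψ, Subtype.ext_iff]
  have : IsCyclic ψ.range := isCyclic_of_injective_ringHom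
    ((Units.coeHom _).comp ψ.range.subtype) (Units.coeHom_injective.comp Subtype.val_injective)
  rw [← hker, Subgroup.index_ker, ← IsCyclic.exponent_eq_card]
  refine Nat.le_of_dvd hp (Monoid.exponent_dvd_of_forall_pow_eq_one ?_)
  rintro ⟨_, a, rfl⟩
  ext1
  simp [← map_pow, hAelem]

end Representation

section

variable {A G : Type*} [Group A] [Group G] [MulDistribMulAction A G]

theorem exists_index_le_forall_inv_mul_smul_mem {p : ℕ} (hp : 0 < p) [Finite G]
    (hAcomm : ∀ x y : A, x * y = y * x) (hAelem : ∀ a : A, a ^ p = 1)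
    (N : Subgroup G) [N.Normal] [IsInvariantSubgroup A N] (hN : commutator G ≤ N)
    (hmax : ∀ L : Subgroup G, IsInvariantSubgroup A L → N ≤ L → L = N ∨ L = ⊤) :
    ∃ B : Subgroup A, B.index ≤ p ∧ ∀ b ∈ B, ∀ g : G, g⁻¹ * (b • g) ∈ N := by
  let : CommGroup (G ⧸ N) :=
    { mul_comm := fun x y => QuotientGroup.induction_on x fun g => QuotientGroup.induction_on y
        fun h => QuotientGroup.eq.mpr <| by
          simpa [commutatorElement_def, mul_assoc] using
            hN (Subgroup.commutator_mem_commutator (Subgroup.mem_top h⁻¹) (Subgroup.mem_top g⁻¹)) }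
  have hirred (L : AddSubgroup (Additive (G ⧸ N))) (hL : ∀ a : A, ∀ x ∈ L, a • x ∈ L) :
      L = ⊥ ∨ L = ⊤ := by
    let L₀ := L.toSubgroup'.comap (QuotientGroup.mk' N)
    have hL₀ : IsInvariantSubgroup A L₀ := ⟨fun a _ hg => hL a _ hg⟩
    have hNL₀ : N ≤ L₀ := fun g hg => by
      simp [L₀, (QuotientGroup.eq_one_iff g).mpr hg]
    refine (hmax L₀ hL₀ hNL₀).imp (fun h => ?_) (fun h => ?_)
    · refine (AddSubgroup.eq_bot_iff_forall _).mpr fun x hx => ?_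
      obtain ⟨g, hg⟩ := QuotientGroup.mk_surjective x.toMul
      have : g ∈ L₀ := by simpa [L₀, hg] using hx
      rw [h] at this
      rw [← ofMul_toMul x, ← hg, (QuotientGroup.eq_one_iff g).mpr this, ofMul_one]
    · refine (AddSubgroup.eq_top_iff' _).mpr fun x => ?_
      obtain ⟨g, hg⟩ := QuotientGroup.mk_surjective x.toMul
      have : g ∈ L₀ := h ▸ Subgroup.mem_top g
      simpa [L₀, hg] using this
  refine ⟨_, index_ker_toModuleEnd_le hp hAcomm hAelem hirred, fun b hb g => ?_⟩
  have hbg : b • (g : G ⧸ N) = g :=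
    congrArg (fun f : Module.End ℤ _ => (f (.ofMul (g : G ⧸ N))).toMul) hb
  exact QuotientGroup.eq.mp hbg.symm

theorem exists_index_le_actionCommutator_le {p : ℕ} (hp : 0 < p) [Finite G]
    (hAcomm : ∀ x y : A, x * y = y * x) (hAelem : ∀ a : A, a ^ p = 1)
    {H K : Subgroup G} [IsInvariantSubgroup A H]
    (hK : Maximal (fun L => IsInvariantSubgroup A L ∧ ⁅H, H⁆ ≤ L ∧ L < H) K) :
    ∃ B : Subgroup A, B.index ≤ p ∧ actionCommutator A G H B ≤ K := by
  obtain ⟨⟨hKinv, hHK, hKH⟩, hmax⟩ := hK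
  have hcomm : commutator H ≤ K.subgroupOf H := by
    rw [← Subgroup.map_subtype_le_map_subtype, Subgroup.map_subtype_commutator,
      Subgroup.subgroupOf_map_subtype]
    exact le_inf hHK (Subgroup.commutator_le_self H)
  have : (K.subgroupOf H).Normal := Subgroup.Normal.of_commutator_le _ hcomm
  have hmaxH (L : Subgroup H) (hL : IsInvariantSubgroup A L) (hKL : K.subgroupOf H ≤ L) :
      L = K.subgroupOf H ∨ L = ⊤ := by
    have hL₀ : IsInvariantSubgroup A (L.map H.subtype) :=
      ⟨fun a _ ⟨h, hh, hg⟩ => ⟨a • h, hL.smul_mem a hh, hg ▸ rfl⟩⟩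
    have hKL₀ : K ≤ L.map H.subtype := by
      simpa [Subgroup.subgroupOf_map_subtype, inf_eq_left.mpr hKH.le] using
        Subgroup.map_mono (f := H.subtype) hKL
    rcases (Subgroup.map_subtype_le L).lt_or_eq with hlt | heq
    · refine .inl (le_antisymm ?_ hKL)
      rw [← Subgroup.map_subtype_le_map_subtype, Subgroup.subgroupOf_map_subtype]
      exact le_inf (hmax ⟨hL₀, hHK.trans hKL₀, hlt⟩ hKL₀) (Subgroup.map_subtype_le L)
    · refine .inr (eq_top_iff.mpr (Subgroup.map_subtype_le_map_subtype.mp ?_))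
      rw [heq]
      exact Subgroup.map_subtype_le ⊤
  obtain ⟨B, hB, hBK⟩ := exists_index_le_forall_inv_mul_smul_mem hp hAcomm hAelem _ hcomm hmaxH
  refine ⟨B, hB, (Subgroup.closure_le _).mpr ?_⟩
  rintro _ ⟨h, hh, b, hb, rfl⟩
  exact hBK b hb ⟨h, hh⟩

theorem le_closure_fixedSubgroup {p : ℕ} (hp : 0 < p) [Finite G] [Group.IsSolvable G]
    (hAcomm : ∀ x y : A, x * y = y * x) (hAelem : ∀ a : A, a ^ p = 1)
    (hgood : IsGoodAction A G) (H : Subgroup G) [IsInvariantSubgroup A H] :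
    H ≤ Subgroup.closure (⋃ (B : Subgroup A) (_ : B.index ≤ p), (fixedSubgroup A G B : Set G)) := by
  revert ‹IsInvariantSubgroup A H›
  induction H using WellFoundedLT.induction with
  | _ H ih =>
  intro
  rcases eq_or_ne H ⊥ with rfl | hH
  · exact bot_le
  obtain ⟨K, hK⟩ := Set.Finite.exists_maximal
    (s := {L | IsInvariantSubgroup A L ∧ ⁅H, H⁆ ≤ L ∧ L < H}) (Set.toFinite _)
    ⟨⁅H, H⁆, inferInstance, le_rfl, Subgroup.commutator_lt_self hH⟩
  obtain ⟨B, hB, hBK⟩ := exists_index_le_actionCommutator_le hp hAcomm hAelem hK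
  have : IsInvariantSubgroup A K := hK.prop.1
  have hK_le := ih K hK.prop.2.2
  intro h hh
  obtain ⟨u, hu, v, hv, rfl⟩ : h ∈ (actionCommutator A G H B : Set G) *
      ((H ⊓ fixedSubgroup A G B : Subgroup G) : Set G) :=
    hgood B H (fun b _ _ => IsInvariantSubgroup.smul_mem b) ▸ hh
  exact mul_mem (hK_le (hBK hu)) (Subgroup.subset_closure (Set.mem_iUnion₂.mpr ⟨B, hB, hv.2⟩))

end

theorem stmt10_general {p : ℕ} (hp : p.Prime)
    (G A : Type*) [Group G] [Group A] [Finite G] [MulDistribMulAction A G]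
    (hGsolv : IsSolvable G)
    (hAcomm : ∀ x y : A, x * y = y * x) (hAelem : ∀ a : A, a ^ p = 1)
    (hAcard : p ^ 3 ≤ Nat.card A)
    (hgood : IsGoodAction A G)
    (hcent : ∀ a : A, a ≠ 1 → ∀ x ∈ fixedPointsOf A G a, ∀ y ∈ fixedPointsOf A G a,
      Commute x y) :
    ∀ x y : G, Commute x y := by
  set U := ⋃ (B : Subgroup A) (_ : B.index ≤ p), (fixedSubgroup A G B : Set G)
  have hU : ∀ x ∈ U, ∀ y ∈ U, x * y = y * x := by
    simp only [U, Set.mem_iUnion₂]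
    rintro x ⟨B₁, hB₁, hx⟩ y ⟨B₂, hB₂, hy⟩
    have hindex : B₁.index * B₂.index < Nat.card A := calc
      B₁.index * B₂.index ≤ p ^ 2 := sq p ▸ Nat.mul_le_mul hB₁ hB₂
      _ < p ^ 3 := Nat.pow_lt_pow_right hp.one_lt (by norm_num)
      _ ≤ Nat.card A := hAcard
    obtain ⟨c, hc, hc1⟩ := (B₁ ⊓ B₂).bot_or_exists_ne_one.resolve_left
      (Subgroup.inf_ne_bot_of_index_mul_index_lt hindex)
    exact hcent c hc1 x (hx c hc.1) y (hy c hc.2)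
  have : Group.IsSolvable G := hGsolv
  have hU_top := le_closure_fixedSubgroup hp.pos hAcomm hAelem hgood ⊤
  intro x y
  exact congrArg Subtype.val <| (Subgroup.isMulCommutative_closure hU).is_comm.comm
    ⟨x, hU_top trivial⟩ ⟨y, hU_top trivial⟩

/-- (Lemma 3.1) If an elementary abelian `p`-group `A` with `|A| ≥ p^3`
acts goodly on a finite solvable group `G` and `C_G(a)` is abelian for every `1 ≠ a ∈ A`,
then `G` is abelian. -/
theorem stmt10 {p : ℕ} (hp : p.Prime)
    (G A : Type*) [Group G] [Group A] [Finite G] [Finite A] [MulDistribMulAction A G]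
    (hGsolv : IsSolvable G)
    (hAcomm : ∀ x y : A, x * y = y * x) (hAelem : ∀ a : A, a ^ p = 1)
    (hAcard : p ^ 3 ≤ Nat.card A)
    (hgood : IsGoodAction A G)
    (hcent : ∀ a : A, a ≠ 1 → ∀ x ∈ fixedPointsOf A G a, ∀ y ∈ fixedPointsOf A G a,
      Commute x y) :
    ∀ x y : G, Commute x y :=
  stmt10_general hp G A hGsolv hAcomm hAelem hAcard hgood hcent
end
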